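/- Let Φ : (M₁,Ω₁) → (M₂,Ω₂) be a state-preserving Markov map with adjoint Φ^♯, Stinespring data (L_{Φ^♯}, σ_{Φ^♯}, τ_{Φ^♯}, V_{Φ^♯}, Λ_{Φ^♯}), and suppose Ĵ : L_{Φ^♯} → L_{Φ^♯} is an anti-unitary with Ĵ V_{Φ^♯} = V_{Φ^♯} J₁ and Ĵ Λ_{Φ^♯} = Λ_{Φ^♯} J₂. If furthermore σ_{Φ^♯}(M₂) commutes with β(M₁) := Ĵ* τ_{Φ^♯}(J₁M₁J₁) Ĵ, then for all A₂ ∈ M₂ and Y₁ ∈ M₁': Λ_{Φ^♯}* σ_{Φ^♯}(A₂) Ĵ*τ_{Φ^♯}(Y₁)Ĵ Λ_{Φ^♯} = A₂ Φ(J₁Y₁J₁) ∈ M₂ and V_{Φ^♯}* σ_{Φ^♯}(A₂) Ĵ*τ_{Φ^♯}(Y₁)Ĵ V_{Φ^♯} = Φ^♯(A₂) J₁Y₁J₁ ∈ M₁. -/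

import Mathlib

/-!
Write `K = J₁ Y₁ J₁ ∈ M₁` and `γ = Ĵ* τ(Y₁) Ĵ`. Since `τ(Y₁) V = V Y₁` and `Ĵ` intertwines `V`
with `J₁`, we get `γ V = V K`; as `γ` commutes with `σ(M₂)`, it acts on the Stinespring space by
`[X ⊗ h] ↦ [X ⊗ K h]`. Hence the compression `R = Λ* γ Λ` satisfies
`⟨B Ω₂, R C Ω₂⟩ = ⟨Ω₁, Φ^♯(B* C) K Ω₁⟩ = ⟨B Ω₂, C Φ(K) Ω₂⟩`, which puts `R` in `M₂'` with
`R Ω₂ = Φ(K) Ω₂`. On the other hand `Ĵ Λ = Λ J₂` gives `R = J₂ (Λ* τ(Y₁) Λ) J₂`, and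
`Λ* τ(Y₁) Λ ∈ M₂'` by the same computation, so `R ∈ M₂`. As `Ω₂` is separating, `R = Φ(K)`, and
both identities follow from `σ(A₂) Λ = Λ A₂` and `V* σ(A₂) V = Φ^♯(A₂)`.
-/

open scoped InnerProductSpace ComplexOrder
open ContinuousLinearMap (adjoint)

noncomputable section

/-- Complete positivity of a map `Φ` relative to a subset `M` of operators: matrix
amplifications preserve positivity, expressed on vectors. -/
def IsCP {H K : Type*} [NormedAddCommGroup H] [InnerProductSpace ℂ H]
    [NormedAddCommGroup K] [InnerProductSpace ℂ K]
    (M : Set (H →L[ℂ] H)) (Φ : (H →L[ℂ] H) →ₗ[ℂ] (K →L[ℂ] K)) : Prop :=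
  ∀ (n : ℕ) (B : Fin n → Fin n → (H →L[ℂ] H)),
    (∀ i j, B i j ∈ M) →
    (∀ v : Fin n → H, 0 ≤ ∑ i, ∑ j, ⟪v i, (B i j) (v j)⟫_ℂ) →
    ∀ w : Fin n → K, 0 ≤ ∑ i, ∑ j, ⟪w i, (Φ (B i j)) (w j)⟫_ℂ

/-- The Stinespring space `L_Φ` of a (completely positive) map `Φ`, defined on the
subset `M` of `B(H)` and taking values in `B(K)`: the separation-completion of the
algebraic tensor product `M ⊗ K` with respect to the semi-inner product
`⟨A ⊗ h, X ⊗ k⟩ = ⟨h, Φ(A* X) k⟩`, presented abstractly as a Hilbert space `L`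
together with the bilinear map `emb A h = [A ⊗ h]` having dense span. -/
structure StinespringData {H K : Type*}
    [NormedAddCommGroup H] [InnerProductSpace ℂ H] [CompleteSpace H]
    [NormedAddCommGroup K] [InnerProductSpace ℂ K] [CompleteSpace K]
    (M : Set (H →L[ℂ] H)) (Φ : (H →L[ℂ] H) →ₗ[ℂ] (K →L[ℂ] K))
    (L : Type*) [NormedAddCommGroup L] [InnerProductSpace ℂ L] [CompleteSpace L] where
  emb : (H →L[ℂ] H) →ₗ[ℂ] K →ₗ[ℂ] L
  inner_emb : ∀ A X : H →L[ℂ] H, A ∈ M → X ∈ M → ∀ h k : K,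
    ⟪emb A h, emb X k⟫_ℂ = ⟪h, Φ (star A * X) k⟫_ℂ
  dense_span :
    (Submodule.span ℂ {x : L | ∃ A ∈ M, ∃ h : K, x = emb A h}).topologicalClosure = ⊤
/-- `Ω` is a cyclic vector for the set of operators `M`. -/
def IsCyclicVec {H : Type*} [NormedAddCommGroup H] [InnerProductSpace ℂ H]
    (M : Set (H →L[ℂ] H)) (Ω : H) : Prop :=
  (Submodule.span ℂ {x : H | ∃ A ∈ M, x = A Ω}).topologicalClosure = ⊤

/-- `Ω` is a separating vector for the set of operators `M`. -/
def IsSeparatingVec {H : Type*} [NormedAddCommGroup H] [InnerProductSpace ℂ H]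
    (M : Set (H →L[ℂ] H)) (Ω : H) : Prop :=
  ∀ A ∈ M, A Ω = 0 → A = 0

/-- `Φ` preserves the vector states given by `Ω₁`, `Ω₂` on the algebra `M`. -/
def IsStatePreserving {H K : Type*} [NormedAddCommGroup H] [InnerProductSpace ℂ H]
    [NormedAddCommGroup K] [InnerProductSpace ℂ K]
    (M : Set (H →L[ℂ] H)) (Ω₁ : H) (Ω₂ : K)
    (Φ : (H →L[ℂ] H) →ₗ[ℂ] (K →L[ℂ] K)) : Prop :=
  ∀ A ∈ M, ⟪Ω₂, Φ A Ω₂⟫_ℂ = ⟪Ω₁, A Ω₁⟫_ℂ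
/-- The modular conjugation of a von Neumann algebra `M` in standard form with cyclic and
separating vector `Ω`: an anti-unitary involution `J` fixing `Ω`, together with the induced
conjugation `conj A = J A J` on operators, which exchanges `M` with its commutant `M'` and
acts as the identity on the natural positive cone. -/
structure ModularConjugation {H : Type*}
    [NormedAddCommGroup H] [InnerProductSpace ℂ H] [CompleteSpace H]
    (M : VonNeumannAlgebra H) (Ω : H) where
  J : H → H
  conj : (H →L[ℂ] H) → (H →L[ℂ] H)
  map_add : ∀ x y, J (x + y) = J x + J y
  map_smul : ∀ (a : ℂ) (x : H), J (a • x) = (starRingEnd ℂ a) • J x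
  invol : ∀ x, J (J x) = x
  inner_map : ∀ x y, ⟪J x, J y⟫_ℂ = ⟪y, x⟫_ℂ
  fixΩ : J Ω = Ω
  conj_apply : ∀ (A : H →L[ℂ] H) (x : H), conj A x = J (A (J x))
  conj_mem : ∀ A ∈ M, conj A ∈ M.commutant
  conj_mem' : ∀ Y ∈ M.commutant, conj Y ∈ M
  fix_cone : ∀ A ∈ M, J ((A * conj A) Ω) = (A * conj A) Ω

namespace IsCyclicVec

open ContinuousLinearMap

variable {H : Type*} [NormedAddCommGroup H] [InnerProductSpace ℂ H] {Ω : H}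

theorem dense {M : Set (H →L[ℂ] H)} (hcyc : IsCyclicVec M Ω) :
    Dense (Submodule.span ℂ {x : H | ∃ A ∈ M, x = A Ω} : Set H) :=
  Submodule.dense_iff_topologicalClosure_eq_top.mpr hcyc

theorem ext {E : Type*} [NormedAddCommGroup E] [NormedSpace ℂ E] {M : Set (H →L[ℂ] H)}
    (hcyc : IsCyclicVec M Ω) {S T : H →L[ℂ] E} (h : ∀ A ∈ M, S (A Ω) = T (A Ω)) : S = T :=
  ContinuousLinearMap.ext_on hcyc.dense (by rintro _ ⟨A, hA, rfl⟩; exact h A hA)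

theorem eq_of_inner_eq {M : Set (H →L[ℂ] H)} (hcyc : IsCyclicVec M Ω) {x y : H}
    (h : ∀ A ∈ M, ⟪A Ω, x⟫_ℂ = ⟪A Ω, y⟫_ℂ) : x = y := by
  have hxy : innerSL ℂ x = innerSL ℂ y :=
    hcyc.ext fun A hA => by rw [innerSL_apply_apply, innerSL_apply_apply, ← inner_conj_symm,
      h A hA, inner_conj_symm]
  exact ext_inner_right ℂ fun v => by
    simpa only [innerSL_apply_apply] using DFunLike.congr_fun hxy v

theorem mem_commutant_of_inner_eq [CompleteSpace H] {M : VonNeumannAlgebra H}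
    (hcyc : IsCyclicVec (M : Set (H →L[ℂ] H)) Ω) {S : H →L[ℂ] H} (ω : (H →L[ℂ] H) → ℂ)
    (h : ∀ B ∈ M, ∀ C ∈ M, ⟪B Ω, S (C Ω)⟫_ℂ = ω (star B * C)) : S ∈ M.commutant := by
  refine VonNeumannAlgebra.mem_commutant_iff.mpr fun g hg => ?_
  refine hcyc.ext fun C hC => hcyc.eq_of_inner_eq fun B hB => ?_
  calc ⟪B Ω, g (S (C Ω))⟫_ℂ = ⟪(star g * B) Ω, S (C Ω)⟫_ℂ := by
        rw [mul_apply_eq_comp, star_eq_adjoint, adjoint_inner_left]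
    _ = ω (star (star g * B) * C) := h _ (mul_mem (star_mem hg) hB) C hC
    _ = ω (star B * (g * C)) := by rw [star_mul, star_star, mul_assoc]
    _ = ⟪B Ω, S ((g * C) Ω)⟫_ℂ := (h B hB _ (mul_mem hg hC)).symm

end IsCyclicVec

theorem IsSeparatingVec.eq_of_apply_eq {H : Type*} [NormedAddCommGroup H]
    [InnerProductSpace ℂ H] [CompleteSpace H] {M : VonNeumannAlgebra H} {Ω : H}
    (hsep : IsSeparatingVec (M : Set (H →L[ℂ] H)) Ω) {A B : H →L[ℂ] H} (hA : A ∈ M)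
    (hB : B ∈ M) (h : A Ω = B Ω) : A = B :=
  sub_eq_zero.mp <| hsep _ (sub_mem hA hB) (by rw [sub_apply, h, sub_self])

namespace ModularConjugation

open ContinuousLinearMap

variable {H L : Type*} [NormedAddCommGroup H] [InnerProductSpace ℂ H] [CompleteSpace H]
  [NormedAddCommGroup L] [InnerProductSpace ℂ L]
  {M : VonNeumannAlgebra H} {Ω : H} (J : ModularConjugation M Ω)

theorem conj_conj (A : H →L[ℂ] H) : J.conj (J.conj A) = A := by
  ext x
  rw [J.conj_apply, J.conj_apply, J.invol, J.invol]

theorem eq_conj_of_inner {R S : H →L[ℂ] H} (h : ∀ x y, ⟪x, R y⟫_ℂ = ⟪S (J.J y), J.J x⟫_ℂ) :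
    R = J.conj S :=
  ContinuousLinearMap.ext fun y => ext_inner_left ℂ fun x => by
    rw [h, J.conj_apply, ← J.inner_map (J.J x), J.invol]

variable {Jh Jh' : L → L} {G T : L →L[ℂ] L}

theorem antiConj_comp_eq {W : H →L[ℂ] L} {Y : H →L[ℂ] H} (hJh_inv : ∀ x, Jh' (Jh x) = x)
    (hJW : ∀ x, Jh (W x) = W (J.J x)) (hG : ∀ x, G x = Jh' (T (Jh x)))
    (hTW : T ∘L W = W ∘L Y) : G ∘L W = W ∘L J.conj Y :=
  ContinuousLinearMap.ext fun h => calc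
    G (W h) = Jh' (T (W (J.J h))) := by rw [hG, hJW]
    _ = Jh' (W (Y (J.J h))) := congrArg Jh' (DFunLike.congr_fun hTW (J.J h))
    _ = Jh' (Jh (W (J.conj Y h))) := by rw [hJW, J.conj_apply, J.invol]
    _ = W (J.conj Y h) := hJh_inv _

variable [CompleteSpace L]

theorem adjoint_comp_antiConj_comp_eq {W : H →L[ℂ] L} (hJh_inner : ∀ x y, ⟪Jh x, Jh y⟫_ℂ = ⟪y, x⟫_ℂ)
    (hJh_inv' : ∀ x, Jh (Jh' x) = x) (hJW : ∀ x, Jh (W x) = W (J.J x))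
    (hG : ∀ x, G x = Jh' (T (Jh x))) : adjoint W ∘L G ∘L W = J.conj (adjoint W ∘L T ∘L W) :=
  J.eq_conj_of_inner fun x y => calc
    ⟪x, (adjoint W ∘L G ∘L W) y⟫_ℂ = ⟪W x, Jh' (T (Jh (W y)))⟫_ℂ := by
        rw [comp_apply, comp_apply, adjoint_inner_right, hG]
    _ = ⟪Jh (Jh' (T (Jh (W y)))), Jh (W x)⟫_ℂ := (hJh_inner _ _).symm
    _ = ⟪T (W (J.J y)), W (J.J x)⟫_ℂ := by rw [hJh_inv', hJW, hJW]
    _ = ⟪(adjoint W ∘L T ∘L W) (J.J y), J.J x⟫_ℂ := by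
        rw [comp_apply, comp_apply, adjoint_inner_left]

end ModularConjugation

namespace StinespringData

open ContinuousLinearMap

variable {H₁ H₂ L : Type*} [NormedAddCommGroup H₁] [InnerProductSpace ℂ H₁] [CompleteSpace H₁]
  [NormedAddCommGroup H₂] [InnerProductSpace ℂ H₂] [CompleteSpace H₂]
  [NormedAddCommGroup L] [InnerProductSpace ℂ L] [CompleteSpace L]
  {M₂ : VonNeumannAlgebra H₂} {Φs : (H₂ →L[ℂ] H₂) →ₗ[ℂ] (H₁ →L[ℂ] H₁)}
  (Ss : StinespringData (M₂ : Set (H₂ →L[ℂ] H₂)) Φs L)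
  {σ : (H₂ →L[ℂ] H₂) → (L →L[ℂ] L)} {V : H₁ →L[ℂ] L}

theorem emb_eq_apply (hσ : ∀ A ∈ M₂, ∀ X ∈ M₂, ∀ h, σ A (Ss.emb X h) = Ss.emb (A * X) h)
    (hV : ∀ h, V h = Ss.emb 1 h) {C : H₂ →L[ℂ] H₂} (hC : C ∈ M₂) (h : H₁) :
    Ss.emb C h = σ C (V h) := by
  rw [hV, hσ C hC 1 (one_mem M₂), mul_one]

theorem adjoint_comp_comp_eq (hσ : ∀ A ∈ M₂, ∀ X ∈ M₂, ∀ h, σ A (Ss.emb X h) = Ss.emb (A * X) h)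
    (hV : ∀ h, V h = Ss.emb 1 h) {A : H₂ →L[ℂ] H₂} (hA : A ∈ M₂) :
    adjoint V ∘L σ A ∘L V = Φs A :=
  ContinuousLinearMap.ext fun h => ext_inner_left ℂ fun g => by
    rw [comp_apply, comp_apply, adjoint_inner_right, ← Ss.emb_eq_apply hσ hV hA, hV,
      Ss.inner_emb 1 A (one_mem M₂) hA, star_one, one_mul]

theorem apply_emb_of_commute (hσ : ∀ A ∈ M₂, ∀ X ∈ M₂, ∀ h, σ A (Ss.emb X h) = Ss.emb (A * X) h)
    (hV : ∀ h, V h = Ss.emb 1 h) {G : L →L[ℂ] L} {K : H₁ →L[ℂ] H₁}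
    (hcomm : ∀ C ∈ M₂, Commute (σ C) G) (hGV : G ∘L V = V ∘L K) {C : H₂ →L[ℂ] H₂}
    (hC : C ∈ M₂) (h : H₁) : G (Ss.emb C h) = Ss.emb C (K h) := calc
  G (Ss.emb C h) = σ C (G (V h)) := by
      rw [Ss.emb_eq_apply hσ hV hC, ← mul_apply_eq_comp, ← (hcomm C hC).eq,
        mul_apply_eq_comp]
  _ = Ss.emb C (K h) := by
      rw [← comp_apply G V, hGV, comp_apply, Ss.emb_eq_apply hσ hV hC]

variable {Ω₁ : H₁} {Ω₂ : H₂} {Λ : H₂ →L[ℂ] L}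

theorem comp_eq_comp_of_isCyclicVec
    (hσ : ∀ A ∈ M₂, ∀ X ∈ M₂, ∀ h, σ A (Ss.emb X h) = Ss.emb (A * X) h)
    (hcyc₂ : IsCyclicVec (M₂ : Set (H₂ →L[ℂ] H₂)) Ω₂) (hΛ : ∀ B ∈ M₂, Λ (B Ω₂) = Ss.emb B Ω₁)
    {A : H₂ →L[ℂ] H₂} (hA : A ∈ M₂) : σ A ∘L Λ = Λ ∘L A :=
  hcyc₂.ext fun C hC => by
    rw [comp_apply, comp_apply, hΛ C hC, hσ A hA C hC, ← mul_apply_eq_comp, hΛ _ (mul_mem hA hC)]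

theorem inner_adjoint_comp_comp_apply (hΛ : ∀ B ∈ M₂, Λ (B Ω₂) = Ss.emb B Ω₁)
    {T : L →L[ℂ] L} {K : H₁ →L[ℂ] H₁} (hT : ∀ C ∈ M₂, ∀ h, T (Ss.emb C h) = Ss.emb C (K h))
    {B C : H₂ →L[ℂ] H₂} (hB : B ∈ M₂) (hC : C ∈ M₂) :
    ⟪B Ω₂, (adjoint Λ ∘L T ∘L Λ) (C Ω₂)⟫_ℂ = ⟪Ω₁, Φs (star B * C) (K Ω₁)⟫_ℂ := by
  rw [comp_apply, comp_apply, adjoint_inner_right, hΛ B hB, hΛ C hC, hT C hC,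
    Ss.inner_emb B C hB hC]

theorem adjoint_comp_comp_mem_commutant (hcyc₂ : IsCyclicVec (M₂ : Set (H₂ →L[ℂ] H₂)) Ω₂)
    (hΛ : ∀ B ∈ M₂, Λ (B Ω₂) = Ss.emb B Ω₁) {T : L →L[ℂ] L} {K : H₁ →L[ℂ] H₁}
    (hT : ∀ C ∈ M₂, ∀ h, T (Ss.emb C h) = Ss.emb C (K h)) :
    adjoint Λ ∘L T ∘L Λ ∈ M₂.commutant :=
  hcyc₂.mem_commutant_of_inner_eq (fun X => ⟪Ω₁, Φs X (K Ω₁)⟫_ℂ)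
    fun _ hB _ hC => Ss.inner_adjoint_comp_comp_apply hΛ hT hB hC

end StinespringData

theorem stmt17_general
    {H₁ H₂ : Type*} [NormedAddCommGroup H₁] [InnerProductSpace ℂ H₁] [CompleteSpace H₁]
    [NormedAddCommGroup H₂] [InnerProductSpace ℂ H₂] [CompleteSpace H₂]
    (M₁ : VonNeumannAlgebra H₁) (M₂ : VonNeumannAlgebra H₂) (Ω₁ : H₁) (Ω₂ : H₂)
    (hcyc₂ : IsCyclicVec (M₂ : Set (H₂ →L[ℂ] H₂)) Ω₂)
    (hsep₂ : IsSeparatingVec (M₂ : Set (H₂ →L[ℂ] H₂)) Ω₂)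
    (J₁ : ModularConjugation M₁ Ω₁) (J₂ : ModularConjugation M₂ Ω₂)
    (Φ : (H₁ →L[ℂ] H₁) →ₗ[ℂ] (H₂ →L[ℂ] H₂))
    (hmem : ∀ A ∈ M₁, Φ A ∈ M₂)
    (Φs : (H₂ →L[ℂ] H₂) →ₗ[ℂ] (H₁ →L[ℂ] H₁))
    (hmems : ∀ B ∈ M₂, Φs B ∈ M₁)
    (hadj : ∀ A ∈ M₁, ∀ B ∈ M₂, ⟪Ω₂, B (Φ A Ω₂)⟫_ℂ = ⟪Ω₁, Φs B (A Ω₁)⟫_ℂ)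
    -- Stinespring data (L_{Φ^♯}, σ_{Φ^♯}, τ_{Φ^♯}, V_{Φ^♯}, Λ_{Φ^♯}) of Φ^♯
    (Ls : Type*) [NormedAddCommGroup Ls] [InnerProductSpace ℂ Ls] [CompleteSpace Ls]
    (Ss : StinespringData (M₂ : Set (H₂ →L[ℂ] H₂)) Φs Ls)
    (σ : (H₂ →L[ℂ] H₂) → (Ls →L[ℂ] Ls))
    (hσ : ∀ A ∈ M₂, ∀ X ∈ M₂, ∀ h : H₁, σ A (Ss.emb X h) = Ss.emb (A * X) h)
    (τ : (H₁ →L[ℂ] H₁) → (Ls →L[ℂ] Ls))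
    (hτ : ∀ Y ∈ M₁.commutant, ∀ X ∈ M₂, ∀ h : H₁, τ Y (Ss.emb X h) = Ss.emb X (Y h))
    (V : H₁ →L[ℂ] Ls) (hV : ∀ h : H₁, V h = Ss.emb 1 h)
    (Λ : H₂ →L[ℂ] Ls) (hΛ : ∀ B ∈ M₂, Λ (B Ω₂) = Ss.emb B Ω₁)
    -- the anti-unitary Ĵ on L_{Φ^♯}, with inverse Ĵ* = Jh'
    (Jh Jh' : Ls → Ls)
    (hJh_inner : ∀ x y, ⟪Jh x, Jh y⟫_ℂ = ⟪y, x⟫_ℂ)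
    (hJh_inv : ∀ x, Jh' (Jh x) = x) (hJh_inv' : ∀ x, Jh (Jh' x) = x)
    (hJV : ∀ x : H₁, Jh (V x) = V (J₁.J x))
    (hJΛ : ∀ x : H₂, Jh (Λ x) = Λ (J₂.J x))
    -- γ Y = Ĵ* τ_{Φ^♯}(Y) Ĵ for Y ∈ M₁', so that β(A₁) = γ (J₁ A₁ J₁)
    (γ : (H₁ →L[ℂ] H₁) → (Ls →L[ℂ] Ls))
    (hγ : ∀ Y ∈ M₁.commutant, ∀ x : Ls, γ Y x = Jh' (τ Y (Jh x)))
    -- σ_{Φ^♯}(M₂) commutes with β(M₁) = Ĵ* τ_{Φ^♯}(J₁ M₁ J₁) Ĵ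
    (hcomm : ∀ A₂ ∈ M₂, ∀ A₁ ∈ M₁, Commute (σ A₂) (γ (J₁.conj A₁))) :
    ∀ A₂ ∈ M₂, ∀ Y₁ ∈ M₁.commutant,
      (adjoint Λ ∘L σ A₂ ∘L γ Y₁ ∘L Λ = A₂ * Φ (J₁.conj Y₁) ∧
        A₂ * Φ (J₁.conj Y₁) ∈ M₂) ∧
      (adjoint V ∘L σ A₂ ∘L γ Y₁ ∘L V = Φs A₂ * J₁.conj Y₁ ∧
        Φs A₂ * J₁.conj Y₁ ∈ M₁) := by
  intro A₂ hA₂ Y₁ hY₁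
  set K := J₁.conj Y₁
  have hK : K ∈ M₁ := J₁.conj_mem' Y₁ hY₁
  have hτV : τ Y₁ ∘L V = V ∘L Y₁ := ContinuousLinearMap.ext fun h => by
    simp only [ContinuousLinearMap.comp_apply, hV, hτ Y₁ hY₁ 1 (one_mem M₂)]
  have hγV : γ Y₁ ∘L V = V ∘L K := J₁.antiConj_comp_eq hJh_inv hJV (hγ Y₁ hY₁) hτV
  have hσγ : ∀ C ∈ M₂, Commute (σ C) (γ Y₁) := fun C hC => by
    simpa only [K, J₁.conj_conj] using hcomm C hC K hK
  have hγ_emb : ∀ C ∈ M₂, ∀ h, γ Y₁ (Ss.emb C h) = Ss.emb C (K h) :=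
    fun _ hC => Ss.apply_emb_of_commute hσ hV hσγ hγV hC
  set R := adjoint Λ ∘L γ Y₁ ∘L Λ
  have hR_commutant : R ∈ M₂.commutant := Ss.adjoint_comp_comp_mem_commutant hcyc₂ hΛ hγ_emb
  have hR_conj : R = J₂.conj (adjoint Λ ∘L τ Y₁ ∘L Λ) :=
    J₂.adjoint_comp_antiConj_comp_eq hJh_inner hJh_inv' hJΛ (hγ Y₁ hY₁)
  have hR_mem : R ∈ M₂ := by
    rw [hR_conj]
    exact J₂.conj_mem' _ (Ss.adjoint_comp_comp_mem_commutant hcyc₂ hΛ (hτ Y₁ hY₁))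
  have hRΩ : R Ω₂ = Φ K Ω₂ := hcyc₂.eq_of_inner_eq fun B hB => by
    have h := Ss.inner_adjoint_comp_comp_apply hΛ hγ_emb hB (one_mem M₂)
    rw [mul_one, one_apply_eq_self] at h
    rw [h, ← hadj K hK _ (star_mem hB), ContinuousLinearMap.star_eq_adjoint,
      ContinuousLinearMap.adjoint_inner_right]
  have hRΦ : R = Φ K := hsep₂.eq_of_apply_eq hR_mem (hmem K hK) hRΩ
  refine ⟨⟨?_, mul_mem hA₂ (hmem K hK)⟩, ⟨?_, mul_mem (hmems A₂ hA₂) hK⟩⟩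
  · calc adjoint Λ ∘L σ A₂ ∘L γ Y₁ ∘L Λ = adjoint Λ ∘L γ Y₁ ∘L σ A₂ ∘L Λ := by
          simp only [← ContinuousLinearMap.comp_assoc, ← ContinuousLinearMap.mul_def,
            (hσγ A₂ hA₂).eq]
      _ = R * A₂ := by rw [Ss.comp_eq_comp_of_isCyclicVec hσ hcyc₂ hΛ hA₂]; rfl
      _ = A₂ * R := ((VonNeumannAlgebra.mem_commutant_iff.mp hR_commutant) A₂ hA₂).symm
      _ = A₂ * Φ K := by rw [hRΦ]
  · calc adjoint V ∘L σ A₂ ∘L γ Y₁ ∘L V = (adjoint V ∘L σ A₂ ∘L V) ∘L K := by rw [hγV]; rfl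
      _ = Φs A₂ * K := by rw [Ss.adjoint_comp_comp_eq hσ hV hA₂]; rfl

/-- Suppose `Ĵ` is an anti-unitary on `L_{Φ^♯}` with
`Ĵ V_{Φ^♯} = V_{Φ^♯} J₁` and `Ĵ Λ_{Φ^♯} = Λ_{Φ^♯} J₂`, and that `σ_{Φ^♯}(M₂)` commutes
with `β(M₁) = Ĵ* τ_{Φ^♯}(J₁ M₁ J₁) Ĵ`. Then for all `A₂ ∈ M₂`, `Y₁ ∈ M₁'`:
`Λ* σ(A₂) Ĵ*τ(Y₁)Ĵ Λ = A₂ Φ(J₁Y₁J₁) ∈ M₂` and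
`V* σ(A₂) Ĵ*τ(Y₁)Ĵ V = Φ^♯(A₂) J₁Y₁J₁ ∈ M₁`. -/
theorem stmt17
    {H₁ H₂ : Type*} [NormedAddCommGroup H₁] [InnerProductSpace ℂ H₁] [CompleteSpace H₁]
    [NormedAddCommGroup H₂] [InnerProductSpace ℂ H₂] [CompleteSpace H₂]
    (M₁ : VonNeumannAlgebra H₁) (M₂ : VonNeumannAlgebra H₂) (Ω₁ : H₁) (Ω₂ : H₂)
    (hΩ₁ : ‖Ω₁‖ = 1) (hΩ₂ : ‖Ω₂‖ = 1)
    (hcyc₁ : IsCyclicVec (M₁ : Set (H₁ →L[ℂ] H₁)) Ω₁)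
    (hsep₁ : IsSeparatingVec (M₁ : Set (H₁ →L[ℂ] H₁)) Ω₁)
    (hcyc₂ : IsCyclicVec (M₂ : Set (H₂ →L[ℂ] H₂)) Ω₂)
    (hsep₂ : IsSeparatingVec (M₂ : Set (H₂ →L[ℂ] H₂)) Ω₂)
    (J₁ : ModularConjugation M₁ Ω₁) (J₂ : ModularConjugation M₂ Ω₂)
    (Φ : (H₁ →L[ℂ] H₁) →ₗ[ℂ] (H₂ →L[ℂ] H₂))
    (hmem : ∀ A ∈ M₁, Φ A ∈ M₂) (hunital : Φ 1 = 1)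
    (hCP : IsCP (M₁ : Set (H₁ →L[ℂ] H₁)) Φ)
    (hstate : IsStatePreserving (M₁ : Set (H₁ →L[ℂ] H₁)) Ω₁ Ω₂ Φ)
    (Φs : (H₂ →L[ℂ] H₂) →ₗ[ℂ] (H₁ →L[ℂ] H₁))
    (hmems : ∀ B ∈ M₂, Φs B ∈ M₁) (hunitals : Φs 1 = 1)
    (hCPs : IsCP (M₂ : Set (H₂ →L[ℂ] H₂)) Φs)
    (hstates : IsStatePreserving (M₂ : Set (H₂ →L[ℂ] H₂)) Ω₂ Ω₁ Φs)
    (hadj : ∀ A ∈ M₁, ∀ B ∈ M₂, ⟪Ω₂, B (Φ A Ω₂)⟫_ℂ = ⟪Ω₁, Φs B (A Ω₁)⟫_ℂ)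
    -- Stinespring data (L_{Φ^♯}, σ_{Φ^♯}, τ_{Φ^♯}, V_{Φ^♯}, Λ_{Φ^♯}) of Φ^♯
    (Ls : Type*) [NormedAddCommGroup Ls] [InnerProductSpace ℂ Ls] [CompleteSpace Ls]
    (Ss : StinespringData (M₂ : Set (H₂ →L[ℂ] H₂)) Φs Ls)
    (σ : (H₂ →L[ℂ] H₂) → (Ls →L[ℂ] Ls))
    (hσ : ∀ A ∈ M₂, ∀ X ∈ M₂, ∀ h : H₁, σ A (Ss.emb X h) = Ss.emb (A * X) h)
    (τ : (H₁ →L[ℂ] H₁) → (Ls →L[ℂ] Ls))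
    (hτ : ∀ Y ∈ M₁.commutant, ∀ X ∈ M₂, ∀ h : H₁, τ Y (Ss.emb X h) = Ss.emb X (Y h))
    (V : H₁ →L[ℂ] Ls) (hV : ∀ h : H₁, V h = Ss.emb 1 h)
    (Λ : H₂ →L[ℂ] Ls) (hΛ : ∀ B ∈ M₂, Λ (B Ω₂) = Ss.emb B Ω₁)
    -- the anti-unitary Ĵ on L_{Φ^♯}, with inverse Ĵ* = Jh'
    (Jh Jh' : Ls → Ls)
    (hJh_add : ∀ x y, Jh (x + y) = Jh x + Jh y)
    (hJh_smul : ∀ (c : ℂ) (x : Ls), Jh (c • x) = (starRingEnd ℂ c) • Jh x)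
    (hJh_inner : ∀ x y, ⟪Jh x, Jh y⟫_ℂ = ⟪y, x⟫_ℂ)
    (hJh_inv : ∀ x, Jh' (Jh x) = x) (hJh_inv' : ∀ x, Jh (Jh' x) = x)
    (hJV : ∀ x : H₁, Jh (V x) = V (J₁.J x))
    (hJΛ : ∀ x : H₂, Jh (Λ x) = Λ (J₂.J x))
    -- γ Y = Ĵ* τ_{Φ^♯}(Y) Ĵ for Y ∈ M₁', so that β(A₁) = γ (J₁ A₁ J₁)
    (γ : (H₁ →L[ℂ] H₁) → (Ls →L[ℂ] Ls))
    (hγ : ∀ Y ∈ M₁.commutant, ∀ x : Ls, γ Y x = Jh' (τ Y (Jh x)))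
    -- σ_{Φ^♯}(M₂) commutes with β(M₁) = Ĵ* τ_{Φ^♯}(J₁ M₁ J₁) Ĵ
    (hcomm : ∀ A₂ ∈ M₂, ∀ A₁ ∈ M₁, Commute (σ A₂) (γ (J₁.conj A₁))) :
    ∀ A₂ ∈ M₂, ∀ Y₁ ∈ M₁.commutant,
      (adjoint Λ ∘L σ A₂ ∘L γ Y₁ ∘L Λ = A₂ * Φ (J₁.conj Y₁) ∧
        A₂ * Φ (J₁.conj Y₁) ∈ M₂) ∧
      (adjoint V ∘L σ A₂ ∘L γ Y₁ ∘L V = Φs A₂ * J₁.conj Y₁ ∧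
        Φs A₂ * J₁.conj Y₁ ∈ M₁) :=
  stmt17_general M₁ M₂ Ω₁ Ω₂ hcyc₂ hsep₂ J₁ J₂ Φ hmem Φs hmems hadj Ls Ss σ hσ τ hτ V hV Λ hΛ Jh Jh'
    hJh_inner hJh_inv hJh_inv' hJV hJΛ γ hγ hcomm
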